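/- arXiv:1906.00501 — 8 statements merged into one kernel-verified Lean document; each statement's English description precedes it below -/
import Mathlib

section
/- Let n = ax² + bx + c and d = a₁x² + b₁x + c₁ be quadratics in x (coefficients depending on y) satisfying bb₁ = 2(a₁c + ac₁). Then the seed involutions j₁(x) = -(bx+2c)/(b+2ax) and j₂(x) = -(b₁x+2c₁)/(b₁+2a₁x) satisfy (j₁∘j₂)² = id wherever defined. -/
/-- Under the condition `b b₁ = 2(a₁ c + a c₁)`, the composition of the seed
involutions `j₁(x) = -(bx+2c)/(b+2ax)` and `j₂(x) = -(b₁x+2c₁)/(b₁+2a₁x)` is an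
involution: `(j₁∘j₂)² = id` wherever defined. -/
theorem seed_composition_involution {K : Type*} [Field K] [CharZero K]
    (a b c a₁ b₁ c₁ : K) (hcond : b * b₁ = 2 * (a₁ * c + a * c₁)) (x : K)
    (j₁ : K → K) (j₂ : K → K)
    (hj₁ : ∀ z, j₁ z = -(b * z + 2 * c) / (b + 2 * a * z))
    (hj₂ : ∀ z, j₂ z = -(b₁ * z + 2 * c₁) / (b₁ + 2 * a₁ * z))
    (h1 : b₁ + 2 * a₁ * x ≠ 0)
    (h2 : b + 2 * a * j₂ x ≠ 0)
    (h3 : b₁ + 2 * a₁ * j₁ (j₂ x) ≠ 0)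
    (h4 : b + 2 * a * j₂ (j₁ (j₂ x)) ≠ 0) :
    j₁ (j₂ (j₁ (j₂ x))) = x := by
  set P := a * c₁ - a₁ * c with hP
  set Q := b * c₁ - b₁ * c with hQ
  set R := a * b₁ - a₁ * b with hR
  have e1 := hj₂ x
  have e2 := hj₁ (j₂ x)
  have e3 := hj₂ (j₁ (j₂ x))
  have e4 := hj₁ (j₂ (j₁ (j₂ x)))
  set y := j₂ x with hy
  set z := j₁ y with hz
  set w := j₂ z with hw
  set r := j₁ w with hr
  rw [eq_div_iff h1] at e1
  rw [eq_div_iff h2] at e2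
  rw [eq_div_iff h3] at e3
  rw [eq_div_iff h4] at e4
  -- key step 1 : z (P+Rx) = -(Px+Q)
  have k1 : z * (P + R * x) = -(P * x + Q) := by
    linear_combination (-(1:K)/2) * ((b₁ + 2*a₁*x) * e2 - (b + 2*a*z) * e1 + (z - x) * hcond) + (z - x) * hcond
  -- key step 2 : r (P+Rz) = -(Pz+Q)
  have k2 : r * (P + R * z) = -(P * z + Q) := by
    linear_combination (-(1:K)/2) * ((b₁ + 2*a₁*z) * e4 - (b + 2*a*r) * e3 + (r - z) * hcond) + (r - z) * hcond
  -- nonvanishing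
  have n1 : P + R * x ≠ 0 := by
    have : (b + 2*a*y) * (b₁ + 2*a₁*x) = -2 * (P + R * x) := by
      linear_combination 2*a*e1 + x*hcond + (1 - x) * hcond
    intro h; apply mul_ne_zero h2 h1; rw [this, h]; ring
  have n2 : P + R * z ≠ 0 := by
    have : (b + 2*a*w) * (b₁ + 2*a₁*z) = -2 * (P + R * z) := by
      linear_combination 2*a*e3 + z*hcond + (1 - z) * hcond
    intro h; apply mul_ne_zero h4 h3; rw [this, h]; ring
  have key : (P + R * z) * (P + R * x) = P^2 - Q * R := by
    linear_combination R * k1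
  have n3 : P^2 - Q*R ≠ 0 := key ▸ mul_ne_zero n2 n1
  have : r * (P^2 - Q*R) = x * (P^2 - Q*R) := by
    linear_combination (P + R*x) * k2 + (P - R*r) * k1 + (-2*P) * k1
  exact mul_right_cancel₀ n3 this
end

section
/- Assume bb₁ = 2(a₁c + ac₁). Let I(x) = (ax² + bx + c)/(a₁x² + b₁x + c₁) and let j₁(x) = -(bx+2c)/(b+2ax) be the seed involution. Then, with X = j₁(x), (a·X² + b·X + c)·(a₁x² + b₁x + c₁) + (a₁X² + b₁X + c₁)·(ax² + bx + c) = 0, so that I is anti-preserved by j₁: I(j₁(x)) = -I(x) wherever defined. -/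
/-- Under `b b₁ = 2(a₁ c + a c₁)`, the seed involution `j₁` anti-preserves the
ratio `I(x) = (ax²+bx+c)/(a₁x²+b₁x+c₁)`: with `X = -(bx+2c)/(b+2ax)` one has
`(aX²+bX+c)(a₁x²+b₁x+c₁) = -(a₁X²+b₁X+c₁)(ax²+bx+c)`. -/
theorem seed_j1_anti_preserves_ratio {K : Type*} [Field K] [CharZero K]
    (a b c a₁ b₁ c₁ : K) (hcond : b * b₁ = 2 * (a₁ * c + a * c₁))
    (x X : K) (hden : b + 2 * a * x ≠ 0)
    (hX : X = -(b * x + 2 * c) / (b + 2 * a * x)) :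
    (a * X ^ 2 + b * X + c) * (a₁ * x ^ 2 + b₁ * x + c₁) =
      -((a₁ * X ^ 2 + b₁ * X + c₁) * (a * x ^ 2 + b * x + c)) := by
  have h2 : (b + 2 * a * x) ^ 2 ≠ 0 := pow_ne_zero _ hden
  have e1 : a * X ^ 2 + b * X + c =
      (a * (b * x + 2 * c) ^ 2 - b * (b * x + 2 * c) * (b + 2 * a * x)
        + c * (b + 2 * a * x) ^ 2) / (b + 2 * a * x) ^ 2 := by
    rw [hX]; field_simp [show b + a * x * 2 ≠ 0 by convert hden using 1; ring]; ring
  have e2 : a₁ * X ^ 2 + b₁ * X + c₁ =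
      (a₁ * (b * x + 2 * c) ^ 2 - b₁ * (b * x + 2 * c) * (b + 2 * a * x)
        + c₁ * (b + 2 * a * x) ^ 2) / (b + 2 * a * x) ^ 2 := by
    rw [hX]; generalize b + 2 * a * x = d at hden ⊢; field_simp; ring
  rw [e1, e2, div_mul_eq_mul_div, div_mul_eq_mul_div, ← neg_div,
    div_eq_div_iff h2 h2]
  linear_combination (-2 * (a * x ^ 2 + b * x + c) ^ 2 * (b + 2 * a * x) ^ 2) * hcond
end

section
/- The F_V Yang-Baxter map satisfies the set-theoretical Yang-Baxter equation: with R^{pq}(x,y) = (y + (p-q)/(x-y), x + (p-q)/(x-y)) acting on indicated factors of K³, one has R^{pq}₁₂ ∘ R^{pr}₁₃ ∘ R^{qr}₂₃ = R^{qr}₂₃ ∘ R^{pr}₁₃ ∘ R^{pq}₁₂ wherever all maps are defined. -/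
/-- The `F_V` map with parameters `(s,t)`. -/
noncomputable def FVmap {K : Type*} [Field K] (s t : K) (p : K × K) : K × K :=
  (p.2 + (s - t) / (p.1 - p.2), p.1 + (s - t) / (p.1 - p.2))

/-- `F_V` acting on coordinates 1,2 of `K³`. -/
noncomputable def FV12 {K : Type*} [Field K] (s t : K) (p : K × K × K) : K × K × K :=
  ((FVmap s t (p.1, p.2.1)).1, (FVmap s t (p.1, p.2.1)).2, p.2.2)

/-- `F_V` acting on coordinates 1,3 of `K³`. -/
noncomputable def FV13 {K : Type*} [Field K] (s t : K) (p : K × K × K) : K × K × K :=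
  ((FVmap s t (p.1, p.2.2)).1, p.2.1, (FVmap s t (p.1, p.2.2)).2)

/-- `F_V` acting on coordinates 2,3 of `K³`. -/
noncomputable def FV23 {K : Type*} [Field K] (s t : K) (p : K × K × K) : K × K × K :=
  (p.1, (FVmap s t (p.2.1, p.2.2)).1, (FVmap s t (p.2.1, p.2.2)).2)

/-!
Write `a = x - y`, `b = y - z`, `α = p - q`, `β = q - r`, `γ = p - r = α + β`, and
`A = a b - β`, `B = a b + α`. Each application of `F_V` swaps two coordinates and shifts
both by the same amount, and the differences met along either side are `A / b`, `b B / A`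
(left) and `B / a`, `a A / B` (right). This gives both triple compositions in closed form,
and comparing them coordinatewise reduces to the single identity `α A + β B = γ a b`.
-/

section ClosedForms

variable {K : Type*} [Field K]

theorem FVmap_of_sub_eq_div {s t x y n m : K} (h : x - y = n / m) :
    FVmap s t (x, y) = (y + (s - t) * m / n, x + (s - t) * m / n) := by
  simp only [FVmap, h, div_div_eq_mul_div]

variable (p q r x y z : K)

theorem FV12_FV13_FV23_apply (hb : y - z ≠ 0)
    (hA : (x - y) * (y - z) - (q - r) ≠ 0) :
    FV12 p q (FV13 p r (FV23 q r (x, y, z))) =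
      (z + (q - r) / (y - z)
          + (p - q) * ((x - y) * (y - z) - (q - r)) / ((y - z) * ((x - y) * (y - z) + (p - q))),
        y + (q - r) / (y - z) + (p - r) * (y - z) / ((x - y) * (y - z) - (q - r))
          + (p - q) * ((x - y) * (y - z) - (q - r)) / ((y - z) * ((x - y) * (y - z) + (p - q))),
        x + (p - r) * (y - z) / ((x - y) * (y - z) - (q - r))) := by
  have h13 : x - (y + (q - r) / (y - z)) = ((x - y) * (y - z) - (q - r)) / (y - z) := by
    rw [eq_div_iff hb]; field_simp; ring
  have h12 : y + (q - r) / (y - z) + (p - r) * (y - z) / ((x - y) * (y - z) - (q - r))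
      - (z + (q - r) / (y - z))
      = (y - z) * ((x - y) * (y - z) + (p - q)) / ((x - y) * (y - z) - (q - r)) := by
    generalize hA_def : (x - y) * (y - z) - (q - r) = A at hA ⊢
    field_simp
    rw [← hA_def]; ring
  have h23 : FVmap q r (y, z) = (z + (q - r) / (y - z), y + (q - r) / (y - z)) := rfl
  simp only [FV23, FV13, FV12, h23, FVmap_of_sub_eq_div h13, FVmap_of_sub_eq_div h12]

theorem FV23_FV13_FV12_apply (ha : x - y ≠ 0)
    (hB : (x - y) * (y - z) + (p - q) ≠ 0) :
    FV23 q r (FV13 p r (FV12 p q (x, y, z))) =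
      (z + (p - r) * (x - y) / ((x - y) * (y - z) + (p - q)),
        y + (p - q) / (x - y) + (p - r) * (x - y) / ((x - y) * (y - z) + (p - q))
          + (q - r) * ((x - y) * (y - z) + (p - q)) / ((x - y) * ((x - y) * (y - z) - (q - r))),
        x + (p - q) / (x - y)
          + (q - r) * ((x - y) * (y - z) + (p - q)) / ((x - y) * ((x - y) * (y - z) - (q - r))))
    := by
  have h13 : y + (p - q) / (x - y) - z = ((x - y) * (y - z) + (p - q)) / (x - y) := by
    rw [eq_div_iff ha]; field_simp; ring
  have h23 : x + (p - q) / (x - y)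
      - (y + (p - q) / (x - y) + (p - r) * (x - y) / ((x - y) * (y - z) + (p - q)))
      = (x - y) * ((x - y) * (y - z) - (q - r)) / ((x - y) * (y - z) + (p - q)) := by
    generalize hB_def : (x - y) * (y - z) + (p - q) = B at hB ⊢
    field_simp
    rw [← hB_def]; ring
  have h12 : FVmap p q (x, y) = (y + (p - q) / (x - y), x + (p - q) / (x - y)) := rfl
  simp only [FV12, FV13, FV23, h12, FVmap_of_sub_eq_div h13, FVmap_of_sub_eq_div h23]

end ClosedForms

theorem FV_yang_baxter_general {K : Type*} [Field K] (p q r : K)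
    (P : K × K × K)
    (h1 : P.2.1 - P.2.2 ≠ 0)
    (h2 : (FV23 q r P).1 - (FV23 q r P).2.2 ≠ 0)
    (h4 : P.1 - P.2.1 ≠ 0)
    (h5 : (FV12 p q P).1 - (FV12 p q P).2.2 ≠ 0) :
    FV12 p q (FV13 p r (FV23 q r P)) = FV23 q r (FV13 p r (FV12 p q P)) := by
  obtain ⟨x, y, z⟩ := P
  simp only [FV12, FV23, FVmap] at h1 h2 h4 h5
  have hA : (x - y) * (y - z) - (q - r) ≠ 0 := by
    contrapose! h2
    field_simp
    linear_combination h2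
  have hB : (x - y) * (y - z) + (p - q) ≠ 0 := by
    contrapose! h5
    field_simp
    linear_combination h5
  rw [FV12_FV13_FV23_apply p q r x y z h1 hA, FV23_FV13_FV12_apply p q r x y z h4 hB]
  generalize hA_def : (x - y) * (y - z) - (q - r) = A at hA ⊢
  generalize hB_def : (x - y) * (y - z) + (p - q) = B at hB ⊢
  refine Prod.ext ?_ (Prod.ext ?_ ?_) <;>
    · dsimp only
      field_simp
      rw [← hA_def, ← hB_def]
      ring

/-- The `F_V` map satisfies the set-theoretical Yang-Baxter equation
`R₁₂ ∘ R₁₃ ∘ R₂₃ = R₂₃ ∘ R₁₃ ∘ R₁₂` wherever defined. -/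
theorem FV_yang_baxter {K : Type*} [Field K] [CharZero K] (p q r : K)
    (P : K × K × K)
    (h1 : P.2.1 - P.2.2 ≠ 0)
    (h2 : (FV23 q r P).1 - (FV23 q r P).2.2 ≠ 0)
    (h3 : (FV13 p r (FV23 q r P)).1 - (FV13 p r (FV23 q r P)).2.1 ≠ 0)
    (h4 : P.1 - P.2.1 ≠ 0)
    (h5 : (FV12 p q P).1 - (FV12 p q P).2.2 ≠ 0)
    (h6 : (FV13 p r (FV12 p q P)).2.1 - (FV13 p r (FV12 p q P)).2.2 ≠ 0) :
    FV12 p q (FV13 p r (FV23 q r P)) = FV23 q r (FV13 p r (FV12 p q P)) :=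
  FV_yang_baxter_general p q r P h1 h2 h4 h5
end

section
/- The F_III Yang-Baxter map R(x,y) = (y·(px-qy)/(p(x-y)), x·(px-qy)/(q(x-y))) is an involution wherever defined. -/
/-! With `W = (p x - q y) / (x - y)`, the image `(u, v)` of `(x, y)` satisfies
`p u - q v = -(p x - q y)` and `u - v = -W (p x - q y) / (p q)`, so its own weight is `p q / W`.
Applying the map again therefore gives `((x W / q) (p q / W) / p, (y W / p) (p q / W) / q) = (x, y)`. -/

/-- The `F_III` Yang-Baxter map `R(x,y) = ((y/p)·W, (x/q)·W)`, `W = (px-qy)/(x-y)`. -/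
noncomputable def FIII {K : Type*} [Field K] (p q : K) (P : K × K) : K × K :=
  (P.2 / p * ((p * P.1 - q * P.2) / (P.1 - P.2)),
   P.1 / q * ((p * P.1 - q * P.2) / (P.1 - P.2)))

namespace FIII

variable {K : Type*} [Field K] {p q : K} {P : K × K}

noncomputable def weight (p q : K) (P : K × K) : K :=
  (p * P.1 - q * P.2) / (P.1 - P.2)

theorem eq_weight (p q : K) (P : K × K) :
    FIII p q P = (P.2 / p * weight p q P, P.1 / q * weight p q P) := rfl

theorem weight_mul_sub (h : P.1 - P.2 ≠ 0) :
    weight p q P * (P.1 - P.2) = p * P.1 - q * P.2 :=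
  div_mul_cancel₀ _ h

theorem fst_sub_snd (hp : p ≠ 0) (hq : q ≠ 0) :
    (FIII p q P).1 - (FIII p q P).2 = -(weight p q P * (p * P.1 - q * P.2)) / (p * q) := by
  rw [eq_weight]
  field_simp
  ring

theorem mul_fst_sub_mul_snd (hp : p ≠ 0) (hq : q ≠ 0) (h : P.1 - P.2 ≠ 0) :
    p * (FIII p q P).1 - q * (FIII p q P).2 = -(p * P.1 - q * P.2) := by
  rw [eq_weight, ← weight_mul_sub h]
  field_simp
  ring

theorem weight_FIII_mul_weight (hp : p ≠ 0) (hq : q ≠ 0) (h : P.1 - P.2 ≠ 0)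
    (hF : (FIII p q P).1 - (FIII p q P).2 ≠ 0) :
    weight p q (FIII p q P) * weight p q P = p * q := by
  rw [fst_sub_snd hp hq, neg_div, neg_ne_zero, div_ne_zero_iff, mul_ne_zero_iff] at hF
  obtain ⟨⟨hW, hA⟩, -⟩ := hF
  rw [weight, mul_fst_sub_mul_snd hp hq h, fst_sub_snd hp hq]
  field_simp

end FIII

theorem FIII_involution_general {K : Type*} [Field K] (p q x y : K)
    (hp : p ≠ 0) (hq : q ≠ 0) (h1 : x - y ≠ 0)
    (h2 : (FIII p q (x, y)).1 - (FIII p q (x, y)).2 ≠ 0) :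
    FIII p q (FIII p q (x, y)) = (x, y) := by
  have hW := FIII.weight_FIII_mul_weight hp hq h1 h2
  rw [FIII.eq_weight p q (FIII p q (x, y))]
  generalize FIII.weight p q (FIII p q (x, y)) = W' at hW
  rw [FIII.eq_weight p q (x, y)]
  ext
  · field_simp
    linear_combination x * hW
  · field_simp
    linear_combination y * hW

/-- The `F_III` map is an involution wherever defined. -/
theorem FIII_involution {K : Type*} [Field K] [CharZero K] (p q x y : K)
    (hp : p ≠ 0) (hq : q ≠ 0) (h1 : x - y ≠ 0)
    (h2 : (FIII p q (x, y)).1 - (FIII p q (x, y)).2 ≠ 0) :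
    FIII p q (FIII p q (x, y)) = (x, y) :=
  FIII_involution_general p q x y hp hq h1 h2
end

section
/- The F_I Yang-Baxter map R(x,y) = (py·W, qx·W), W = ((1-q)x + q-p + (p-1)y)/(q(1-p)x + (p-q)xy + p(q-1)y), is an involution wherever defined. -/
/-- The `F_I` Yang-Baxter map: `R(x,y) = (p·y·W, q·x·W)` with
`W = ((1-q)x + q - p + (p-1)y)/(q(1-p)x + (p-q)xy + p(q-1)y)`. -/
noncomputable def FI {K : Type*} [Field K] (p q : K) (P : K × K) : K × K :=
  (p * P.2 * (((1 - q) * P.1 + q - p + (p - 1) * P.2) /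
      (q * (1 - p) * P.1 + (p - q) * P.1 * P.2 + p * (q - 1) * P.2)),
   q * P.1 * (((1 - q) * P.1 + q - p + (p - 1) * P.2) /
      (q * (1 - p) * P.1 + (p - q) * P.1 * P.2 + p * (q - 1) * P.2)))

private lemma FI_aux {K : Type*} [Field K] (p q x N D A : K)
    (hp0 : p ≠ 0) (hq0 : q ≠ 0) (hN : N ≠ 0) (hD : D ≠ 0) (hA : A ≠ 0) :
    p * (q * x * (N / D)) * (A / D / (N * (p * q * A) / D ^ 2)) = x := by
  have key : p * (q * x * (N / D)) * (A / D / (N * (p * q * A) / D ^ 2)) =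
      x * ((p * q * N * A * D ^ 2) / (p * q * N * A * D ^ 2)) := by
    field_simp
  rw [key, div_self (by simp [hp0, hq0, hN, hA, hD, pow_ne_zero]), mul_one]

/-- The `F_I` map is an involution wherever defined. -/
theorem FI_involution {K : Type*} [Field K] [CharZero K] (p q x y : K)
    (hp0 : p ≠ 0) (hq0 : q ≠ 0) (hp1 : p ≠ 1) (hq1 : q ≠ 1) (hpq : p ≠ q)
    (h1 : q * (1 - p) * x + (p - q) * x * y + p * (q - 1) * y ≠ 0)
    (h2 : q * (1 - p) * (FI p q (x, y)).1 +
        (p - q) * (FI p q (x, y)).1 * (FI p q (x, y)).2 +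
        p * (q - 1) * (FI p q (x, y)).2 ≠ 0) :
    FI p q (FI p q (x, y)) = (x, y) := by
  simp only [FI] at h2 ⊢
  set N : K := (1 - q) * x + q - p + (p - 1) * y with hNdef
  set D : K := q * (1 - p) * x + (p - q) * x * y + p * (q - 1) * y with hDdef
  set A : K := (p - 1) * (1 - q) * (q * x - p * y) * (x - y) with hAdef
  have e1 : (1 - q) * (p * y * (N / D)) + q - p + (p - 1) * (q * x * (N / D)) = A / D := by
    rw [hNdef, hAdef]
    field_simp
    ring
  have e2 : q * (1 - p) * (p * y * (N / D)) +
      (p - q) * (p * y * (N / D)) * (q * x * (N / D)) +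
      p * (q - 1) * (q * x * (N / D)) = N * (p * q * A) / D ^ 2 := by
    rw [hNdef, hAdef]
    field_simp
    ring
  rw [e2] at h2
  have hNA : N ≠ 0 ∧ A ≠ 0 := by
    constructor <;> intro h <;> apply h2 <;> rw [h] <;> ring
  rw [e1, e2, Prod.mk.injEq]
  obtain ⟨hN, hA⟩ := hNA
  exact ⟨FI_aux p q x N D A hp0 hq0 hN h1 hA,
    by rw [mul_comm p q] at *; exact FI_aux q p y N D A hq0 hp0 hN h1 hA⟩
end

section
/- The F_I map preserves the biquadratic invariant I(x,y) = ((q-p)x²y + q(p-1)x² + p(p-1)y² + 2p(1-q)xy + p(q-p)y) / ((p-q)xy² + q(q-1)x² + p(q-1)y² + 2q(1-p)xy + q(p-q)x): I(R(x,y)) = I(x,y) wherever defined. -/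
set_option maxHeartbeats 4000000


/-- The biquadratic invariant of the `F_I` map. -/
noncomputable def FIinv {K : Type*} [Field K] (p q x y : K) : K :=
  ((q - p) * x ^ 2 * y + q * (p - 1) * x ^ 2 + p * (p - 1) * y ^ 2 +
      2 * p * (1 - q) * x * y + p * (q - p) * y) /
    ((p - q) * x * y ^ 2 + q * (q - 1) * x ^ 2 + p * (q - 1) * y ^ 2 +
      2 * q * (1 - p) * x * y + q * (p - q) * x)

/-- `F_I` preserves the biquadratic invariant wherever defined. -/
theorem FI_preserves_invariant {K : Type*} [Field K] [CharZero K] (p q x y : K)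
    (hp0 : p ≠ 0) (hq0 : q ≠ 0) (hp1 : p ≠ 1) (hq1 : q ≠ 1) (hpq : p ≠ q)
    (hW : q * (1 - p) * x + (p - q) * x * y + p * (q - 1) * y ≠ 0)
    (hI1 : (p - q) * x * y ^ 2 + q * (q - 1) * x ^ 2 + p * (q - 1) * y ^ 2 +
        2 * q * (1 - p) * x * y + q * (p - q) * x ≠ 0)
    (hI2 : (p - q) * (FI p q (x, y)).1 * (FI p q (x, y)).2 ^ 2 +
        q * (q - 1) * (FI p q (x, y)).1 ^ 2 + p * (q - 1) * (FI p q (x, y)).2 ^ 2 +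
        2 * q * (1 - p) * (FI p q (x, y)).1 * (FI p q (x, y)).2 +
        q * (p - q) * (FI p q (x, y)).1 ≠ 0) :
    FIinv p q (FI p q (x, y)).1 (FI p q (x, y)).2 = FIinv p q x y := by
  obtain ⟨W, hWdef⟩ : ∃ W : K, W = ((1 - q) * x + q - p + (p - 1) * y) / (q * (1 - p) * x + (p - q) * x * y + p * (q - 1) * y) := ⟨_, rfl⟩
  have hX : (FI p q (x, y)).1 = p * y * W := by rw [hWdef]; rfl
  have hY : (FI p q (x, y)).2 = q * x * W := by rw [hWdef]; rfl
  have hDW : W * (q * (1 - p) * x + (p - q) * x * y + p * (q - 1) * y) = ((1 - q) * x + q - p + (p - 1) * y) := by rw [hWdef]; exact div_mul_cancel₀ _ hW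
  have hD3 : (q * (1 - p) * x + (p - q) * x * y + p * (q - 1) * y) ^ 3 ≠ 0 := pow_ne_zero 3 hW
  have keyN : (q - p) * (FI p q (x, y)).1 ^ 2 * (FI p q (x, y)).2 +
      q * (p - 1) * (FI p q (x, y)).1 ^ 2 + p * (p - 1) * (FI p q (x, y)).2 ^ 2 +
      2 * p * (1 - q) * (FI p q (x, y)).1 * (FI p q (x, y)).2 +
      p * (q - p) * (FI p q (x, y)).2 = ((q - p) * x ^ 2 * y + q * (p - 1) * x ^ 2 + p * (p - 1) * y ^ 2 + 2 * p * (1 - q) * x * y + p * (q - p) * y) * (p * q * (1 - p) * (1 - q) * (q * x - p * y) * (x - y) * ((1 - q) * x + q - p + (p - 1) * y)) / (q * (1 - p) * x + (p - q) * x * y + p * (q - 1) * y) ^ 3 := by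
    rw [hX, hY, eq_div_iff hD3]
    linear_combination (((q - p) * (p * y) ^ 2 * (q * x)) * ((W * (q * (1 - p) * x + (p - q) * x * y + p * (q - 1) * y)) ^ 2 + (W * (q * (1 - p) * x + (p - q) * x * y + p * (q - 1) * y)) * ((1 - q) * x + q - p + (p - 1) * y) + ((1 - q) * x + q - p + (p - 1) * y) ^ 2) + (q * (p - 1) * (p * y) ^ 2 + p * (p - 1) * (q * x) ^ 2 + 2 * p * (1 - q) * (p * y) * (q * x)) * (q * (1 - p) * x + (p - q) * x * y + p * (q - 1) * y) * ((W * (q * (1 - p) * x + (p - q) * x * y + p * (q - 1) * y)) + ((1 - q) * x + q - p + (p - 1) * y)) + (p * (q - p) * (q * x)) * (q * (1 - p) * x + (p - q) * x * y + p * (q - 1) * y) ^ 2) * hDW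
  have keyD : (p - q) * (FI p q (x, y)).1 * (FI p q (x, y)).2 ^ 2 +
      q * (q - 1) * (FI p q (x, y)).1 ^ 2 + p * (q - 1) * (FI p q (x, y)).2 ^ 2 +
      2 * q * (1 - p) * (FI p q (x, y)).1 * (FI p q (x, y)).2 +
      q * (p - q) * (FI p q (x, y)).1 = ((p - q) * x * y ^ 2 + q * (q - 1) * x ^ 2 + p * (q - 1) * y ^ 2 + 2 * q * (1 - p) * x * y + q * (p - q) * x) * (p * q * (1 - p) * (1 - q) * (q * x - p * y) * (x - y) * ((1 - q) * x + q - p + (p - 1) * y)) / (q * (1 - p) * x + (p - q) * x * y + p * (q - 1) * y) ^ 3 := by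
    rw [hX, hY, eq_div_iff hD3]
    linear_combination (((p - q) * (p * y) * (q * x) ^ 2) * ((W * (q * (1 - p) * x + (p - q) * x * y + p * (q - 1) * y)) ^ 2 + (W * (q * (1 - p) * x + (p - q) * x * y + p * (q - 1) * y)) * ((1 - q) * x + q - p + (p - 1) * y) + ((1 - q) * x + q - p + (p - 1) * y) ^ 2) + (q * (q - 1) * (p * y) ^ 2 + p * (q - 1) * (q * x) ^ 2 + 2 * q * (1 - p) * (p * y) * (q * x)) * (q * (1 - p) * x + (p - q) * x * y + p * (q - 1) * y) * ((W * (q * (1 - p) * x + (p - q) * x * y + p * (q - 1) * y)) + ((1 - q) * x + q - p + (p - 1) * y)) + (q * (p - q) * (p * y)) * (q * (1 - p) * x + (p - q) * x * y + p * (q - 1) * y) ^ 2) * hDW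
  have hhne : (p * q * (1 - p) * (1 - q) * (q * x - p * y) * (x - y) * ((1 - q) * x + q - p + (p - 1) * y)) ≠ 0 := by
    intro h0
    apply hI2
    rw [keyD, h0, mul_zero, zero_div]
  rw [FIinv, FIinv, keyN, keyD, div_div_div_comm, div_self hD3, div_one,
    mul_div_mul_right _ _ hhne]
end

section
/- The F_II Yang-Baxter map R(x,y) = ((y/p)·W, (x/q)·W) with W = (px - qy + q - p)/(x - y) is an involution wherever defined. -/
/-- The `F_II` Yang-Baxter map: `R(x,y) = ((y/p)·W, (x/q)·W)` with
`W = (px - qy + q - p)/(x - y)`. -/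
noncomputable def FII {K : Type*} [Field K] (p q : K) (P : K × K) : K × K :=
  (P.2 / p * ((p * P.1 - q * P.2 + q - p) / (P.1 - P.2)),
   P.1 / q * ((p * P.1 - q * P.2 + q - p) / (P.1 - P.2)))

/-!
Write `R(x, y) = (u, v)` with `u = yW/p`, `v = xW/q`, `W = W(x, y)`. The numerator of `W(u, v)`
is `(y - x)W + q - p = qy - px`, and `u - v = W(qy - px)/(pq)`, so `W(u, v) = pq/W`.
Hence `R(u, v) = (xW/(pq) · pq/W, yW/(pq) · pq/W) = (x, y)`.
-/

namespace FII

variable {K : Type*} [Field K] {p q : K}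

noncomputable def weight (p q : K) (P : K × K) : K :=
  (p * P.1 - q * P.2 + q - p) / (P.1 - P.2)

theorem eq_weight (P : K × K) :
    FII p q P = (P.2 / p * weight p q P, P.1 / q * weight p q P) :=
  rfl

theorem fst_sub_snd (hp : p ≠ 0) (hq : q ≠ 0) (P : K × K) :
    (FII p q P).1 - (FII p q P).2 = weight p q P * (q * P.2 - p * P.1) / (p * q) := by
  rw [eq_weight]
  field_simp

theorem weight_numerator (hp : p ≠ 0) (hq : q ≠ 0) {P : K × K} (hP : P.1 - P.2 ≠ 0) :
    p * (FII p q P).1 - q * (FII p q P).2 + q - p = q * P.2 - p * P.1 := by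
  simp only [eq_weight, weight]
  field_simp
  ring

theorem weight_FII_mul_weight (hp : p ≠ 0) (hq : q ≠ 0) {P : K × K} (hP : P.1 - P.2 ≠ 0)
    (hRP : (FII p q P).1 - (FII p q P).2 ≠ 0) :
    weight p q (FII p q P) * weight p q P = p * q := by
  rw [fst_sub_snd hp hq] at hRP
  obtain ⟨hW, hD⟩ := mul_ne_zero_iff.mp (div_ne_zero_iff.mp hRP).1
  rw [weight, weight_numerator hp hq hP, fst_sub_snd hp hq]
  field_simp

end FII

theorem FII_involution_general {K : Type*} [Field K] (p q x y : K)
    (hp : p ≠ 0) (hq : q ≠ 0) (h1 : x - y ≠ 0)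
    (h2 : (FII p q (x, y)).1 - (FII p q (x, y)).2 ≠ 0) :
    FII p q (FII p q (x, y)) = (x, y) := by
  have hW : FII.weight p q (x, y) ≠ 0 := by
    rw [FII.fst_sub_snd hp hq] at h2
    exact left_ne_zero_of_mul (div_ne_zero_iff.mp h2).1
  have hWW := FII.weight_FII_mul_weight hp hq h1 h2
  rw [FII.eq_weight (FII p q _)]
  generalize FII.weight p q (FII p q (x, y)) = W' at hWW
  rw [FII.eq_weight (x, y)]
  refine Prod.ext ?_ ?_
  · field_simp
    linear_combination x * hWW
  · field_simp
    linear_combination y * hWW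

/-- The `F_II` map is an involution wherever defined. -/
theorem FII_involution {K : Type*} [Field K] [CharZero K] (p q x y : K)
    (hp : p ≠ 0) (hq : q ≠ 0) (h1 : x - y ≠ 0)
    (h2 : (FII p q (x, y)).1 - (FII p q (x, y)).2 ≠ 0) :
    FII p q (FII p q (x, y)) = (x, y) :=
  FII_involution_general p q x y hp hq h1 h2
end

section
/- The F_IV Yang-Baxter map R(x,y) = (y·W, x·W) with W = 1 - (p-q)/(x-y) is an involution and satisfies the set-theoretical Yang-Baxter equation (R₁₂ ∘ R₁₃ ∘ R₂₃)² = id on K³ with parameters (p,q), (p,r), (q,r) respectively, wherever all maps are defined. -/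
/-- The `F_IV` map with parameters `(s,t)`: `R(x,y) = (y·W, x·W)`,
`W = 1 - (s-t)/(x-y)`. -/
noncomputable def FIV {K : Type*} [Field K] (s t : K) (P : K × K) : K × K :=
  (P.2 * (1 - (s - t) / (P.1 - P.2)), P.1 * (1 - (s - t) / (P.1 - P.2)))

/-- `F_IV` acting on coordinates 1,2 of `K³`. -/
noncomputable def FIV12 {K : Type*} [Field K] (s t : K) (P : K × K × K) : K × K × K :=
  ((FIV s t (P.1, P.2.1)).1, (FIV s t (P.1, P.2.1)).2, P.2.2)

/-- `F_IV` acting on coordinates 1,3 of `K³`. -/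
noncomputable def FIV13 {K : Type*} [Field K] (s t : K) (P : K × K × K) : K × K × K :=
  ((FIV s t (P.1, P.2.2)).1, P.2.1, (FIV s t (P.1, P.2.2)).2)

/-- `F_IV` acting on coordinates 2,3 of `K³`. -/
noncomputable def FIV23 {K : Type*} [Field K] (s t : K) (P : K × K × K) : K × K × K :=
  (P.1, (FIV s t (P.2.1, P.2.2)).1, (FIV s t (P.2.1, P.2.2)).2)

/-!
Each `R^{st}` swaps its two arguments and multiplies both by `w = 1 - (s - t)/(x - y)`. The new
difference is `(s - t) - (x - y)`, so the multiplier used by a second application is `w⁻¹`.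

The triple `R₁₂ ∘ R₁₃ ∘ R₂₃` reverses `(x, y, z)` to `(z μ, y λ μ, x λ)` with `λ = B/A` and
`μ = D/C` for polynomials `A, B, C, D` in `p, q, r, x, y, z`. Evaluated at the image, these
polynomials become `A' = BD/C`, `B' = B`, `C' = BD/A`, `D' = D`, so the second pass uses the
multipliers `λ' = μ⁻¹` and `μ' = λ⁻¹` and returns to `(x, y, z)`.
-/

section

variable {K : Type*} [Field K]

theorem FIV_fst_sub_snd {s t x y : K} (h : x - y ≠ 0) :
    (FIV s t (x, y)).1 - (FIV s t (x, y)).2 = (s - t) - (x - y) := by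
  simp only [FIV]
  field_simp
  ring

theorem FIV_FIV (s t x y : K) (h : x - y ≠ 0)
    (h' : (FIV s t (x, y)).1 - (FIV s t (x, y)).2 ≠ 0) : FIV s t (FIV s t (x, y)) = (x, y) := by
  have hdiff := FIV_fst_sub_snd (s := s) (t := t) h
  rw [hdiff] at h'
  have hw : (1 - (s - t) / (x - y)) * (1 - (s - t) / ((s - t) - (x - y))) = 1 := by
    field_simp
    ring
  rw [FIV, hdiff]
  simp only [FIV, mul_assoc, hw, mul_one]

namespace FIV

variable (p q r : K) (P : K × K × K)

def A : K := (P.1 - P.2.1) * (P.2.1 - P.2.2) + (q - r) * P.2.1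

def B : K := A q r P - (p - r) * (P.2.1 - P.2.2)

def C : K := (P.1 - P.2.1) * (P.2.1 - P.2.2) - (p - q) * P.2.1

def D : K := C p q P - (p - r) * (P.1 - P.2.1)

def scaledReverse : K × K × K :=
  (P.2.2 * (D p q r P / C p q P), P.2.1 * (B p q r P / A q r P) * (D p q r P / C p q P),
    P.1 * (B p q r P / A q r P))

end FIV

open FIV

variable {p q r : K} {P : K × K × K}

theorem FIV23_fst_sub_snd_snd (h : P.2.1 - P.2.2 ≠ 0) :
    (FIV23 q r P).1 - (FIV23 q r P).2.2 = A q r P / (P.2.1 - P.2.2) := by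
  simp only [FIV23, FIV, A]
  field_simp
  ring

theorem FIV13_FIV23_fst_sub_snd_fst (h : P.2.1 - P.2.2 ≠ 0) (hA : A q r P ≠ 0) :
    (FIV13 p r (FIV23 q r P)).1 - (FIV13 p r (FIV23 q r P)).2.1 =
      (P.2.1 - P.2.2 - (q - r)) * C p q P / A q r P := by
  have hx : P.1 - P.2.1 * (1 - (q - r) / (P.2.1 - P.2.2)) = A q r P / (P.2.1 - P.2.2) :=
    FIV23_fst_sub_snd_snd h
  simp only [FIV13, FIV23, FIV, hx]
  field_simp
  simp only [A, C]
  ring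

theorem ne_zero_of_FIV13_FIV23_defined (h₁ : P.2.1 - P.2.2 ≠ 0)
    (h₂ : (FIV23 q r P).1 - (FIV23 q r P).2.2 ≠ 0)
    (h₃ : (FIV13 p r (FIV23 q r P)).1 - (FIV13 p r (FIV23 q r P)).2.1 ≠ 0) :
    A q r P ≠ 0 ∧ P.2.1 - P.2.2 - (q - r) ≠ 0 ∧ C p q P ≠ 0 := by
  rw [FIV23_fst_sub_snd_snd h₁] at h₂
  have hA := (div_ne_zero_iff.1 h₂).1
  rw [FIV13_FIV23_fst_sub_snd_fst h₁ hA] at h₃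
  exact ⟨hA, mul_ne_zero_iff.1 (div_ne_zero_iff.1 h₃).1⟩

theorem FIV12_FIV13_FIV23_eq (h : P.2.1 - P.2.2 ≠ 0) (hA : A q r P ≠ 0)
    (he : P.2.1 - P.2.2 - (q - r) ≠ 0) (hC : C p q P ≠ 0) :
    FIV12 p q (FIV13 p r (FIV23 q r P)) = scaledReverse p q r P := by
  have hx : P.1 - P.2.1 * (1 - (q - r) / (P.2.1 - P.2.2)) = A q r P / (P.2.1 - P.2.2) :=
    FIV23_fst_sub_snd_snd h
  have hy := FIV13_FIV23_fst_sub_snd_fst (p := p) h hA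
  have hw₂₃ : 1 - (q - r) / (P.2.1 - P.2.2) = (P.2.1 - P.2.2 - (q - r)) / (P.2.1 - P.2.2) :=
    one_sub_div h
  have hw₁₃ : 1 - (p - r) / (A q r P / (P.2.1 - P.2.2)) = B p q r P / A q r P := by
    rw [B]
    field_simp
  have hw₁₂ : 1 - (p - q) / ((P.2.1 - P.2.2 - (q - r)) * C p q P / A q r P) =
      (P.2.1 - P.2.2) * D p q r P / ((P.2.1 - P.2.2 - (q - r)) * C p q P) := by
    field_simp
    simp only [A, C, D]
    ring
  simp only [FIV12, FIV13, FIV23, FIV, hx] at hy ⊢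
  rw [hy, hw₁₃, hw₁₂, hw₂₃]
  simp only [scaledReverse]
  field_simp

theorem scaledReverse_fst_sub_snd_fst (hA : A q r P ≠ 0) (hC : C p q P ≠ 0) :
    (scaledReverse p q r P).1 - (scaledReverse p q r P).2.1 =
      -(D p q r P / A q r P) * (P.2.1 - P.2.2) := by
  have key : P.2.2 * A q r P - P.2.1 * B p q r P = -(P.2.1 - P.2.2) * C p q P := by
    simp only [A, B, C]
    ring
  simp only [scaledReverse]
  field_simp
  linear_combination D p q r P * key

theorem scaledReverse_snd_fst_sub_snd_snd (hA : A q r P ≠ 0) (hC : C p q P ≠ 0) :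
    (scaledReverse p q r P).2.1 - (scaledReverse p q r P).2.2 =
      -(B p q r P / C p q P) * (P.1 - P.2.1) := by
  have key : P.2.1 * D p q r P - P.1 * C p q P = -(P.1 - P.2.1) * A q r P := by
    simp only [A, C, D]
    ring
  simp only [scaledReverse]
  field_simp
  linear_combination B p q r P * key

theorem A_scaledReverse (hA : A q r P ≠ 0) (hC : C p q P ≠ 0) :
    A q r (scaledReverse p q r P) = B p q r P * D p q r P / C p q P := by
  rw [A, scaledReverse_fst_sub_snd_fst hA hC, scaledReverse_snd_fst_sub_snd_snd hA hC]
  simp only [scaledReverse]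
  field_simp
  simp only [A]
  ring

theorem B_scaledReverse (hA : A q r P ≠ 0) (hC : C p q P ≠ 0) :
    B p q r (scaledReverse p q r P) = B p q r P := by
  rw [B, A_scaledReverse hA hC, scaledReverse_snd_fst_sub_snd_snd hA hC]
  field_simp
  simp only [D]
  ring

theorem C_scaledReverse (hA : A q r P ≠ 0) (hC : C p q P ≠ 0) :
    C p q (scaledReverse p q r P) = B p q r P * D p q r P / A q r P := by
  rw [C, scaledReverse_fst_sub_snd_fst hA hC, scaledReverse_snd_fst_sub_snd_snd hA hC]
  simp only [scaledReverse]
  field_simp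
  simp only [C]
  ring

theorem D_scaledReverse (hA : A q r P ≠ 0) (hC : C p q P ≠ 0) :
    D p q r (scaledReverse p q r P) = D p q r P := by
  rw [D, C_scaledReverse hA hC, scaledReverse_fst_sub_snd_fst hA hC]
  field_simp
  simp only [B]
  ring

theorem scaledReverse_scaledReverse (hA : A q r P ≠ 0) (hC : C p q P ≠ 0)
    (hA' : A q r (scaledReverse p q r P) ≠ 0) :
    scaledReverse p q r (scaledReverse p q r P) = P := by
  rw [A_scaledReverse hA hC] at hA'
  obtain ⟨hB, hD⟩ := mul_ne_zero_iff.1 (div_ne_zero_iff.1 hA').1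
  rw [scaledReverse, A_scaledReverse hA hC, B_scaledReverse hA hC, C_scaledReverse hA hC,
    D_scaledReverse hA hC]
  simp only [scaledReverse]
  field_simp

end

theorem FIV_involution_and_yang_baxter_general {K : Type*} [Field K]
    (p q r : K) :
    (∀ s t : K, ∀ x y : K, x - y ≠ 0 →
        (FIV s t (x, y)).1 - (FIV s t (x, y)).2 ≠ 0 →
        FIV s t (FIV s t (x, y)) = (x, y)) ∧
    (∀ P : K × K × K,
        -- definedness of the first pass R₁₂ ∘ R₁₃ ∘ R₂₃
        P.2.1 - P.2.2 ≠ 0 →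
        (FIV23 q r P).1 - (FIV23 q r P).2.2 ≠ 0 →
        (FIV13 p r (FIV23 q r P)).1 - (FIV13 p r (FIV23 q r P)).2.1 ≠ 0 →
        -- definedness of the second pass
        (FIV12 p q (FIV13 p r (FIV23 q r P))).2.1 -
            (FIV12 p q (FIV13 p r (FIV23 q r P))).2.2 ≠ 0 →
        (FIV23 q r (FIV12 p q (FIV13 p r (FIV23 q r P)))).1 -
            (FIV23 q r (FIV12 p q (FIV13 p r (FIV23 q r P)))).2.2 ≠ 0 →
        (FIV13 p r (FIV23 q r (FIV12 p q (FIV13 p r (FIV23 q r P))))).1 -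
            (FIV13 p r (FIV23 q r (FIV12 p q (FIV13 p r (FIV23 q r P))))).2.1 ≠ 0 →
        FIV12 p q (FIV13 p r (FIV23 q r
          (FIV12 p q (FIV13 p r (FIV23 q r P))))) = P) := by
  refine ⟨FIV_FIV, fun P h₁ h₂ h₃ h₄ h₅ h₆ => ?_⟩
  obtain ⟨hA, he, hC⟩ := ne_zero_of_FIV13_FIV23_defined h₁ h₂ h₃
  rw [FIV12_FIV13_FIV23_eq h₁ hA he hC] at h₄ h₅ h₆ ⊢
  obtain ⟨hA', he', hC'⟩ := ne_zero_of_FIV13_FIV23_defined h₄ h₅ h₆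
  rw [FIV12_FIV13_FIV23_eq h₄ hA' he' hC']
  exact scaledReverse_scaledReverse hA hC hA'

/-- The `F_IV` Yang-Baxter map is an involution, and the triple composition
`R₁₂ ∘ R₁₃ ∘ R₂₃` squares to the identity (the set-theoretical Yang-Baxter
property for involutive maps), wherever all maps are defined. -/
theorem FIV_involution_and_yang_baxter {K : Type*} [Field K] [CharZero K]
    (p q r : K) :
    (∀ s t : K, ∀ x y : K, x - y ≠ 0 →
        (FIV s t (x, y)).1 - (FIV s t (x, y)).2 ≠ 0 →
        FIV s t (FIV s t (x, y)) = (x, y)) ∧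
    (∀ P : K × K × K,
        -- definedness of the first pass R₁₂ ∘ R₁₃ ∘ R₂₃
        P.2.1 - P.2.2 ≠ 0 →
        (FIV23 q r P).1 - (FIV23 q r P).2.2 ≠ 0 →
        (FIV13 p r (FIV23 q r P)).1 - (FIV13 p r (FIV23 q r P)).2.1 ≠ 0 →
        -- definedness of the second pass
        (FIV12 p q (FIV13 p r (FIV23 q r P))).2.1 -
            (FIV12 p q (FIV13 p r (FIV23 q r P))).2.2 ≠ 0 →
        (FIV23 q r (FIV12 p q (FIV13 p r (FIV23 q r P)))).1 -
            (FIV23 q r (FIV12 p q (FIV13 p r (FIV23 q r P)))).2.2 ≠ 0 →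
        (FIV13 p r (FIV23 q r (FIV12 p q (FIV13 p r (FIV23 q r P))))).1 -
            (FIV13 p r (FIV23 q r (FIV12 p q (FIV13 p r (FIV23 q r P))))).2.1 ≠ 0 →
        FIV12 p q (FIV13 p r (FIV23 q r
          (FIV12 p q (FIV13 p r (FIV23 q r P))))) = P) :=
  FIV_involution_and_yang_baxter_general p q r
end
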